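/- arXiv:1612.09368 — 2 statements merged into one kernel-verified Lean document; each statement's English description precedes it below -/
import Mathlib

section
/- Deleting a single edge <u,v> from a graph G decreases the core number of any vertex by at most 1. -/
open SimpleGraph

/-- The core number of a vertex: the largest `k` such that the vertex lies in a
subgraph of `G` with minimum degree at least `k`. -/
noncomputable def coreNumber {V : Type*} (G : SimpleGraph V) (v : V) : ℕ :=
  sSup {k : ℕ | ∃ H : G.Subgraph, v ∈ H.verts ∧ ∀ w ∈ H.verts, k ≤ (H.neighborSet w).ncard}

/-!
A subgraph `H` witnessing the core number `k` of `w` in `G` loses at most one neighbour at each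
vertex when the edge `uv` is removed, so `H` minus `uv` is a subgraph of `G - uv` containing `w`
of minimum degree at least `k - 1`.
-/

namespace SimpleGraph.Subgraph

variable {V : Type*} {G : SimpleGraph V}

def toDeleteEdges (H : G.Subgraph) (s : Set (Sym2 V)) : (G.deleteEdges s).Subgraph :=
  { H.deleteEdges s with
    adj_sub := fun h => (G.deleteEdges_adj ..).2 ⟨H.adj_sub h.1, h.2⟩ }

theorem ncard_neighborSet_le_ncard_neighborSet_deleteEdges_singleton_add_one [Finite V]
    (H : G.Subgraph) (e : Sym2 V) (x : V) :
    (H.neighborSet x).ncard ≤ ((H.deleteEdges {e}).neighborSet x).ncard + 1 := by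
  have hsub : H.neighborSet x ⊆ (H.deleteEdges {e}).neighborSet x ∪ {b | s(x, b) = e} := by
    intro b hb
    by_cases hxb : s(x, b) = e
    · exact Or.inr hxb
    · exact Or.inl ⟨hb, hxb⟩
  have hle : {b | s(x, b) = e}.ncard ≤ 1 :=
    (Set.ncard_le_one_iff).2 fun hb hc => Sym2.congr_right.1 (hb.trans hc.symm)
  calc (H.neighborSet x).ncard
      ≤ ((H.deleteEdges {e}).neighborSet x ∪ {b | s(x, b) = e}).ncard := Set.ncard_le_ncard hsub
    _ ≤ ((H.deleteEdges {e}).neighborSet x).ncard + {b | s(x, b) = e}.ncard :=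
        Set.ncard_union_le _ _
    _ ≤ ((H.deleteEdges {e}).neighborSet x).ncard + 1 := by omega

end SimpleGraph.Subgraph

section CoreNumber

variable {V : Type*} [Finite V] {G : SimpleGraph V}

theorem bddAbove_setOf_le_ncard_neighborSet (w : V) :
    BddAbove {k : ℕ | ∃ H : G.Subgraph, w ∈ H.verts ∧
      ∀ x ∈ H.verts, k ≤ (H.neighborSet x).ncard} :=
  ⟨Nat.card V, fun _ ⟨_, hw, hk⟩ => (hk w hw).trans (Set.ncard_le_card _)⟩

theorem le_coreNumber {H : G.Subgraph} {w : V} {k : ℕ} (hw : w ∈ H.verts)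
    (hk : ∀ x ∈ H.verts, k ≤ (H.neighborSet x).ncard) : k ≤ coreNumber G w :=
  le_csSup (bddAbove_setOf_le_ncard_neighborSet w) ⟨H, hw, hk⟩

theorem exists_subgraph_coreNumber_le_ncard_neighborSet (G : SimpleGraph V) (w : V) :
    ∃ H : G.Subgraph, w ∈ H.verts ∧
      ∀ x ∈ H.verts, coreNumber G w ≤ (H.neighborSet x).ncard :=
  Nat.sSup_mem
    (s := {k | ∃ H : G.Subgraph, w ∈ H.verts ∧
      ∀ x ∈ H.verts, k ≤ (H.neighborSet x).ncard})
    ⟨0, ⊤, trivial, fun _ _ => Nat.zero_le _⟩ (bddAbove_setOf_le_ncard_neighborSet w)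

end CoreNumber

theorem coreNumber_delete_edge_ge_general {V : Type*} [Fintype V] (G : SimpleGraph V) (u v : V)
    (w : V) :
    coreNumber G w ≤ coreNumber (G.deleteEdges {s(u,v)}) w + 1 := by
  obtain ⟨H, hw, hH⟩ := exists_subgraph_coreNumber_le_ncard_neighborSet G w
  have hcore : coreNumber G w - 1 ≤ coreNumber (G.deleteEdges {s(u,v)}) w :=
    le_coreNumber (H := H.toDeleteEdges {s(u,v)}) hw fun x hx => by
      have hdeg :
          (H.neighborSet x).ncard ≤ ((H.toDeleteEdges {s(u,v)}).neighborSet x).ncard + 1 :=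
        H.ncard_neighborSet_le_ncard_neighborSet_deleteEdges_singleton_add_one s(u,v) x
      have := hH x hx
      omega
  omega

theorem coreNumber_delete_edge_ge {V : Type*} [Fintype V] (G : SimpleGraph V) (u v : V)
    (he : s(u,v) ∈ G.edgeSet) (w : V) :
    coreNumber G w ≤ coreNumber (G.deleteEdges {s(u,v)}) w + 1 :=
  coreNumber_delete_edge_ge_general G u v w
end

section
/- If inserting a single edge <u,v> into G with core_G(u) ≤ core_G(v) changes the core number of some vertex w, then core_G(w) = core_G(u). -/
open SimpleGraph

/-!
Deleting the edge `uv` from a subgraph lowers only the degrees of `u` and `v`, each by one, so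
inserting `uv` raises every core number by at most one. If `core(w)` rises from `k` to `k + 1`,
a witnessing subgraph of `G + uv` must use the new edge (otherwise it already lives in `G`); hence
`u` lies in it and `core_G(u) ≥ k`. If `core_G(u) ≥ k + 1`, then also `core_G(v) ≥ k + 1`, and
gluing `(k + 1)`-cores of `u` and `v` in `G` onto the witness minus `uv` restores the degrees of
`u` and `v`, giving a `(k + 1)`-core of `G` containing `w`, a contradiction.
-/

section

variable {V : Type*} {G G' : SimpleGraph V}

namespace SimpleGraph.Subgraph

def MinDegreeAtLeast (H : G.Subgraph) (k : ℕ) : Prop :=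
  ∀ x ∈ H.verts, k ≤ (H.neighborSet x).ncard

theorem neighborSet_map_ofLE (h : G ≤ G') (H : G.Subgraph) (x : V) :
    (H.map (Hom.ofLE h)).neighborSet x = H.neighborSet x := by
  ext y
  simp [Relation.Map]

theorem neighborSet_comap_ofLE (h : G ≤ G') (H : G'.Subgraph) (x : V) :
    (H.comap (Hom.ofLE h)).neighborSet x = G.neighborSet x ∩ H.neighborSet x := by
  ext y
  simp

theorem ncard_neighborSet_mono [Finite V] {H H' : G.Subgraph} (h : H ≤ H') (x : V) :
    (H.neighborSet x).ncard ≤ (H'.neighborSet x).ncard :=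
  Set.ncard_le_ncard (neighborSet_subset_of_subgraph h x)

theorem MinDegreeAtLeast.sup_of_notMem [Finite V] {H K : G.Subgraph} {k : ℕ}
    (hK : K.MinDegreeAtLeast k) (hH : ∀ x ∈ H.verts, x ∉ K.verts → k ≤ (H.neighborSet x).ncard) :
    (H ⊔ K).MinDegreeAtLeast k := by
  rintro x (hx | hx)
  · by_cases hxK : x ∈ K.verts
    · exact (hK x hxK).trans (ncard_neighborSet_mono le_sup_right x)
    · exact (hH x hx hxK).trans (ncard_neighborSet_mono le_sup_left x)
  · exact (hK x hx).trans (ncard_neighborSet_mono le_sup_right x)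

theorem MinDegreeAtLeast.sup [Finite V] {H K : G.Subgraph} {k : ℕ} (hH : H.MinDegreeAtLeast k)
    (hK : K.MinDegreeAtLeast k) : (H ⊔ K).MinDegreeAtLeast k :=
  hK.sup_of_notMem fun x hx _ => hH x hx

section supEdge

variable {u v : V} (H : (G ⊔ edge u v).Subgraph)

theorem neighborSet_comap_sup_edge_of_not_adj (huv : ¬ H.Adj u v) (x : V) :
    (H.comap (.ofLE le_sup_left)).neighborSet x = H.neighborSet x := by
  rw [neighborSet_comap_ofLE, Set.inter_eq_right]
  intro y hy
  rcases H.adj_sub hy with hG | he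
  · exact hG
  · obtain ⟨⟨rfl, rfl⟩ | ⟨rfl, rfl⟩, -⟩ := (edge_adj ..).1 he
    exacts [absurd hy huv, absurd hy.symm huv]

theorem neighborSet_comap_sup_edge_of_ne {x : V} (hu : x ≠ u) (hv : x ≠ v) :
    (H.comap (.ofLE le_sup_left)).neighborSet x = H.neighborSet x := by
  rw [neighborSet_comap_ofLE, Set.inter_eq_right]
  intro y hy
  rcases H.adj_sub hy with hG | he
  · exact hG
  · grind

theorem exists_neighborSet_subset_insert_comap_sup_edge (x : V) :
    ∃ y, H.neighborSet x ⊆ insert y ((H.comap (.ofLE le_sup_left)).neighborSet x) := by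
  classical
  refine ⟨if x = u then v else u, fun y hy => ?_⟩
  rw [neighborSet_comap_ofLE]
  rcases H.adj_sub hy with hG | he
  · exact Or.inr ⟨hG, hy⟩
  · grind

theorem ncard_neighborSet_le_comap_sup_edge [Finite V] (x : V) :
    (H.neighborSet x).ncard ≤ ((H.comap (.ofLE le_sup_left)).neighborSet x).ncard + 1 := by
  obtain ⟨y, hy⟩ := H.exists_neighborSet_subset_insert_comap_sup_edge x
  exact (Set.ncard_le_ncard hy).trans (Set.ncard_insert_le _ _)

end supEdge

end SimpleGraph.Subgraph

open SimpleGraph.Subgraph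

variable [Finite V]

theorem le_coreNumber_iff {v : V} {k : ℕ} :
    k ≤ coreNumber G v ↔ ∃ H : G.Subgraph, v ∈ H.verts ∧ H.MinDegreeAtLeast k := by
  set S := {k : ℕ | ∃ H : G.Subgraph, v ∈ H.verts ∧ H.MinDegreeAtLeast k}
  have hbdd : BddAbove S := ⟨Nat.card V, fun k ⟨H, hv, hH⟩ => (hH v hv).trans (Set.ncard_le_card _)⟩
  have hne : S.Nonempty := ⟨0, G.singletonSubgraph v, rfl, fun _ _ => Nat.zero_le _⟩
  refine ⟨fun hk => ?_, fun hk => le_csSup hbdd hk⟩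
  obtain ⟨H, hv, hH⟩ := Nat.sSup_mem hne hbdd
  exact ⟨H, hv, fun x hx => hk.trans (hH x hx)⟩

theorem coreNumber_mono (h : G ≤ G') (v : V) : coreNumber G v ≤ coreNumber G' v := by
  obtain ⟨H, hv, hH⟩ := le_coreNumber_iff.1 (le_refl (coreNumber G v))
  refine le_coreNumber_iff.2 ⟨H.map (Hom.ofLE h), by simpa using hv, fun x hx => ?_⟩
  rw [neighborSet_map_ofLE]
  exact hH x (by simpa using hx)

theorem coreNumber_sup_edge_le (u v x : V) : coreNumber (G ⊔ edge u v) x ≤ coreNumber G x + 1 := by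
  obtain ⟨H, hx, hH⟩ := le_coreNumber_iff.1 (le_refl (coreNumber (G ⊔ edge u v) x))
  have : coreNumber (G ⊔ edge u v) x - 1 ≤ coreNumber G x :=
    le_coreNumber_iff.2 ⟨H.comap (.ofLE le_sup_left), hx, fun y hy =>
      Nat.sub_le_of_le_add ((hH y hy).trans (H.ncard_neighborSet_le_comap_sup_edge y))⟩
  omega

theorem le_coreNumber_of_not_adj {u v w : V} {k : ℕ} {H : (G ⊔ edge u v).Subgraph}
    (hw : w ∈ H.verts) (hH : H.MinDegreeAtLeast k) (huv : ¬ H.Adj u v) : k ≤ coreNumber G w :=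
  le_coreNumber_iff.2 ⟨H.comap (.ofLE le_sup_left), hw, fun x hx => by
    rw [H.neighborSet_comap_sup_edge_of_not_adj huv]
    exact hH x hx⟩

theorem le_coreNumber_of_le_coreNumber_endpoints {u v w : V} {k : ℕ}
    {H : (G ⊔ edge u v).Subgraph} (hw : w ∈ H.verts) (hH : H.MinDegreeAtLeast k)
    (hu : k ≤ coreNumber G u) (hv : k ≤ coreNumber G v) : k ≤ coreNumber G w := by
  obtain ⟨Ku, huK, hKu⟩ := le_coreNumber_iff.1 hu
  obtain ⟨Kv, hvK, hKv⟩ := le_coreNumber_iff.1 hv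
  refine le_coreNumber_iff.2 ⟨H.comap (.ofLE le_sup_left) ⊔ (Ku ⊔ Kv), Or.inl hw,
    (hKu.sup hKv).sup_of_notMem fun x hx hxK => ?_⟩
  have hxu : x ≠ u := fun h => hxK (Or.inl (h ▸ huK))
  have hxv : x ≠ v := fun h => hxK (Or.inr (h ▸ hvK))
  rw [H.neighborSet_comap_sup_edge_of_ne hxu hxv]
  exact hH x hx

end

theorem insert_edge_core_change_only_at_core_u_general {V : Type*} [Fintype V] (G : SimpleGraph V)
    (u v : V) (hcore : coreNumber G u ≤ coreNumber G v) (w : V)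
    (hw : coreNumber (G ⊔ fromEdgeSet {s(u,v)}) w ≠ coreNumber G w) :
    coreNumber G w = coreNumber G u := by
  change coreNumber (G ⊔ edge u v) w ≠ _ at hw
  have hsucc : coreNumber (G ⊔ edge u v) w = coreNumber G w + 1 := by
    have := coreNumber_mono (le_sup_left : G ≤ G ⊔ edge u v) w
    have := coreNumber_sup_edge_le (G := G) u v w
    omega
  obtain ⟨H, hwH, hH⟩ := le_coreNumber_iff.1 hsucc.ge
  have huv : H.Adj u v := by
    by_contra huv
    have := le_coreNumber_of_not_adj hwH hH huv
    omega
  have hle : coreNumber G w ≤ coreNumber G u := by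
    have := le_coreNumber_iff.2 ⟨H, H.edge_vert huv, hH⟩
    have := coreNumber_sup_edge_le (G := G) u v u
    omega
  have hge : coreNumber G u ≤ coreNumber G w := by
    by_contra! hlt
    have := le_coreNumber_of_le_coreNumber_endpoints hwH hH hlt (hlt.trans_le hcore)
    omega
  omega

theorem insert_edge_core_change_only_at_core_u {V : Type*} [Fintype V] (G : SimpleGraph V)
    (u v : V) (huv : u ≠ v) (he : s(u,v) ∉ G.edgeSet)
    (hcore : coreNumber G u ≤ coreNumber G v) (w : V)
    (hw : coreNumber (G ⊔ fromEdgeSet {s(u,v)}) w ≠ coreNumber G w) :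
    coreNumber G w = coreNumber G u :=
  insert_edge_core_change_only_at_core_u_general G u v hcore w hw
end
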